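/- arXiv:1902.08381 — 3 statements merged into one kernel-verified Lean document; each statement's English description precedes it below -/
import Mathlib

section
/- Let Λ be a nondegenerate quadratic lattice and Λ' a full sublattice of Λ (i.e., of finite index). Then for every natural number N there exists a natural number N' such that every isometry of Λ'_ℚ preserving Λ' and congruent to the identity modulo N'Λ' also preserves Λ and is congruent to the identity modulo NΛ. -/
/-!
Since `Λ` is finitely generated and `Λ'` spans `Λ_ℚ`, some `m > 0` satisfies `mΛ ⊆ Λ'`.
Take `N' = mN`: for `x ∈ Λ` we have `mx ∈ Λ'`, so `m (g x - x) = g (mx) - mx ∈ mNΛ'`, and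
cancelling `m` in the torsion-free group `Λ_ℚ` gives `g x - x ∈ NΛ' ⊆ NΛ`.
-/

open Submodule

theorem Submodule.exists_pos_zsmul_mem_of_mem_span_rat {V : Type*} [AddCommGroup V]
    [Module ℚ V] {L : Submodule ℤ V} {x : V} (hx : x ∈ span ℚ (L : Set V)) :
    ∃ n : ℕ, 0 < n ∧ (n : ℤ) • x ∈ L := by
  induction hx using span_induction with
  | mem z hz => exact ⟨1, one_pos, by simpa using hz⟩
  | zero => exact ⟨1, one_pos, by simp⟩
  | add a b _ _ ha hb =>
    obtain ⟨n, hn, hna⟩ := ha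
    obtain ⟨k, hk, hkb⟩ := hb
    refine ⟨n * k, Nat.mul_pos hn hk, ?_⟩
    have hsplit :
        ((n * k : ℕ) : ℤ) • (a + b) = (k : ℤ) • (n : ℤ) • a + (n : ℤ) • (k : ℤ) • b := by
      rw [Nat.cast_mul, smul_add, smul_smul, smul_smul, mul_comm (k : ℤ)]
    rw [hsplit]
    exact add_mem (L.smul_mem _ hna) (L.smul_mem _ hkb)
  | smul q a _ ha =>
    obtain ⟨n, hn, hna⟩ := ha
    refine ⟨q.den * n, Nat.mul_pos q.pos hn, ?_⟩
    have hclear : ((q.den * n : ℕ) : ℤ) • q • a = q.num • (n : ℤ) • a := by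
      simp only [← Int.cast_smul_eq_zsmul ℚ, smul_smul]
      push_cast
      rw [mul_right_comm, Rat.den_mul_eq_num]
    rw [hclear]
    exact L.smul_mem _ hna

theorem Submodule.exists_pos_zsmul_mem_of_fg {V : Type*} [AddCommGroup V]
    {L L' : Submodule ℤ V} (hL : L.FG) (h : ∀ x ∈ L, ∃ n : ℕ, 0 < n ∧ (n : ℤ) • x ∈ L') :
    ∃ m : ℕ, 0 < m ∧ ∀ x ∈ L, (m : ℤ) • x ∈ L' := by
  classical
  obtain ⟨s, rfl⟩ := hL
  choose! n hn hnx using fun x (hx : x ∈ s) => h x (subset_span hx)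
  refine ⟨∏ x ∈ s, n x, Finset.prod_pos hn, fun x hx => ?_⟩
  induction hx using span_induction with
  | mem z hz =>
    obtain ⟨c, hc⟩ := Finset.dvd_prod_of_mem n hz
    rw [hc, Nat.cast_mul, mul_comm, mul_smul]
    exact L'.smul_mem _ (hnx z hz)
  | zero => simp
  | add a b _ _ ha hb => rw [smul_add]; exact add_mem ha hb
  | smul c a _ ha => rw [smul_comm]; exact L'.smul_mem _ ha

theorem exists_map_sub_self_eq_zsmul {V F : Type*} [AddCommGroup V] [Module.IsTorsionFree ℤ V]
    [FunLike F V V] [AddMonoidHomClass F V V] {L L' : Submodule ℤ V} {m N : ℕ} (hm : 0 < m)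
    (hmL : ∀ x ∈ L, (m : ℤ) • x ∈ L') (g : F)
    (hg : ∀ x ∈ L', ∃ y ∈ L', g x - x = ((m * N : ℕ) : ℤ) • y) :
    ∀ x ∈ L, ∃ y ∈ L', g x - x = (N : ℤ) • y := by
  intro x hx
  obtain ⟨y, hy, hxy⟩ := hg _ (hmL x hx)
  refine ⟨y, hy, smul_right_injective V (by exact_mod_cast hm.ne' : (m : ℤ) ≠ 0) ?_⟩
  simp only [smul_sub, ← map_zsmul g, hxy, Nat.cast_mul, mul_smul]

theorem stmt_1_general {V : Type*} [AddCommGroup V] [Module ℚ V]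
    (B : LinearMap.BilinForm ℚ V)
    (Λ Λ' : Submodule ℤ V) (hfg : Λ.FG)
    (hsub : Λ' ≤ Λ) (hfull' : Submodule.span ℚ (Λ' : Set V) = ⊤)
    (N : ℕ) (hN : 0 < N) :
    ∃ N' : ℕ, 0 < N' ∧ ∀ g : V ≃ₗ[ℚ] V,
      (∀ x y, B (g x) (g y) = B x y) →
      (∀ x ∈ Λ', g x ∈ Λ') →
      (∀ x ∈ Λ', ∃ y ∈ Λ', g x - x = (N' : ℤ) • y) →
      (∀ x ∈ Λ, g x ∈ Λ) ∧ (∀ x ∈ Λ, ∃ y ∈ Λ, g x - x = (N : ℤ) • y) := by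
  obtain ⟨m, hm, hmΛ⟩ := exists_pos_zsmul_mem_of_fg hfg fun x _ =>
    exists_pos_zsmul_mem_of_mem_span_rat (hfull' ▸ mem_top : x ∈ span ℚ (Λ' : Set V))
  refine ⟨m * N, Nat.mul_pos hm hN, fun g _ _ hg => ?_⟩
  have : Module.IsTorsionFree ℤ V := .trans_faithfulSMul ℤ ℚ V
  have hcong := exists_map_sub_self_eq_zsmul hm hmΛ g hg
  refine ⟨fun x hx => ?_, fun x hx => ?_⟩
  · obtain ⟨y, hy, hxy⟩ := hcong x hx
    rw [sub_eq_iff_eq_add'.mp hxy]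
    exact add_mem hx (Λ.smul_mem _ (hsub hy))
  · obtain ⟨y, hy, hxy⟩ := hcong x hx
    exact ⟨y, hsub hy, hxy⟩

/-- If `Λ'` is a full (finite-index) sublattice of a nondegenerate quadratic lattice `Λ`,
then for every level `N` there is a level `N'` such that every isometry of `Λ'_ℚ = Λ_ℚ`
preserving `Λ'` and congruent to the identity modulo `N'Λ'` also preserves `Λ` and is
congruent to the identity modulo `NΛ`. -/
theorem stmt_1 {V : Type*} [AddCommGroup V] [Module ℚ V] [FiniteDimensional ℚ V]
    (B : LinearMap.BilinForm ℚ V) (hsymm : ∀ x y, B x y = B y x)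
    (hnd : ∀ x, (∀ y, B x y = 0) → x = 0)
    (Λ Λ' : Submodule ℤ V) (hfg : Λ.FG)
    (hfull : Submodule.span ℚ (Λ : Set V) = ⊤)
    (hint : ∀ x ∈ Λ, ∀ y ∈ Λ, ∃ n : ℤ, B x y = (n : ℚ))
    (hsub : Λ' ≤ Λ) (hfull' : Submodule.span ℚ (Λ' : Set V) = ⊤)
    (N : ℕ) (hN : 0 < N) :
    ∃ N' : ℕ, 0 < N' ∧ ∀ g : V ≃ₗ[ℚ] V,
      (∀ x y, B (g x) (g y) = B x y) →
      (∀ x ∈ Λ', g x ∈ Λ') →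
      (∀ x ∈ Λ', ∃ y ∈ Λ', g x - x = (N' : ℤ) • y) →
      (∀ x ∈ Λ, g x ∈ Λ) ∧ (∀ x ∈ Λ, ∃ y ∈ Λ, g x - x = (N : ℤ) • y) :=
  stmt_1_general B Λ Λ' hfg hsub hfull' N hN
end

section
/- Let Λ''_ℚ be a nondegenerate rational quadratic space of signature (1, m) with m ≥ 2 containing at least one isotropic line. Then Λ''_ℚ contains infinitely many isotropic lines; in particular, given an isotropic line I ⊆ Λ''_ℚ, there exist isotropic lines I₃, I₄ ⊆ Λ''_ℚ such that I, I₃, I₄ are linearly independent. -/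
/-!
An isotropic `x ≠ 0` cannot be a multiple of the single positive basis vector, so it pairs
nontrivially with some negative basis vector `b j`. A second negative basis vector `b k` gives
`z ⊥ x` with `B z z < 0`, and `b j`, corrected along `z` and `x`, gives a hyperbolic partner `u`
of `x` with `u ⊥ z`. Then `x + t • z - (t² B(z,z)/2) • u` is isotropic for every `t`; pairing
with `u` and `z` shows that these lines are pairwise distinct and that `x`, `u` and any of
them with `t ≠ 0` are linearly independent.
-/

namespace LinearMap.BilinForm

variable {K V : Type*} [Field K] [AddCommGroup V] [Module K V] {B : LinearMap.BilinForm K V}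

structure IsHyperbolicPair (B : LinearMap.BilinForm K V) (x u : V) : Prop where
  isotropic_left : B x x = 0
  isotropic_right : B u u = 0
  apply_eq_one : B x u = 1

theorem isHyperbolicPair_sub_smul [NeZero (2 : K)] (hB : B.IsSymm) {x w : V}
    (hx : B x x = 0) (hw : B x w = 1) : B.IsHyperbolicPair x (w - (B w w / 2) • x) where
  isotropic_left := hx
  isotropic_right := by
    simp only [map_sub, map_smul, LinearMap.sub_apply, LinearMap.smul_apply, smul_eq_mul, hx,
      hB.eq w x, hw]
    field_simp
    ring
  apply_eq_one := by simp [hx, hw]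

theorem exists_isHyperbolicPair_and_apply_eq_zero [NeZero (2 : K)] (hB : B.IsSymm) {x z w : V}
    (hx : B x x = 0) (hxz : B x z = 0) (hz : B z z ≠ 0) (hw : B x w ≠ 0) :
    ∃ u, B.IsHyperbolicPair x u ∧ B u z = 0 := by
  let w' := (B x w)⁻¹ • (w - (B z w / B z z) • z)
  have hxw' : B x w' = 1 := by simp [w', hxz, hw]
  have hzw' : B z w' = 0 := by simp [w', hz]
  refine ⟨_, isHyperbolicPair_sub_smul hB hx hxw', ?_⟩
  rw [hB.eq]
  simp [hzw', hB.eq z x, hxz]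

/-- The image of `x` under the Eichler transformation `E(u, -t • z)`. -/
def isotropicParam (B : LinearMap.BilinForm K V) (x u z : V) (t : K) : V :=
  x + t • z - (t ^ 2 * B z z / 2) • u

variable {x u z : V}

theorem apply_isotropicParam_of_orthogonal (hB : B.IsSymm) (hxz : B x z = 0) (huz : B u z = 0)
    (t : K) : B z (B.isotropicParam x u z t) = t * B z z := by
  simp [isotropicParam, hB.eq z x, hB.eq z u, hxz, huz]

namespace IsHyperbolicPair

theorem apply_right_isotropicParam (h : B.IsHyperbolicPair x u) (hB : B.IsSymm) (huz : B u z = 0)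
    (t : K) : B u (B.isotropicParam x u z t) = 1 := by
  simp [isotropicParam, hB.eq u x, h.apply_eq_one, h.isotropic_right, huz]

theorem apply_left_isotropicParam (h : B.IsHyperbolicPair x u) (hxz : B x z = 0) (t : K) :
    B x (B.isotropicParam x u z t) = -(t ^ 2 * B z z / 2) := by
  simp [isotropicParam, h.isotropic_left, h.apply_eq_one, hxz]

theorem apply_isotropicParam_self [NeZero (2 : K)] (h : B.IsHyperbolicPair x u) (hB : B.IsSymm)
    (hxz : B x z = 0) (huz : B u z = 0) (t : K) :
    B (B.isotropicParam x u z t) (B.isotropicParam x u z t) = 0 := by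
  -- expand the first argument only, so that the pairings of `x`, `z`, `u` with it apply
  nth_rewrite 1 [isotropicParam]
  simp only [map_add, map_sub, map_smul, LinearMap.add_apply, LinearMap.sub_apply,
    LinearMap.smul_apply, smul_eq_mul, h.apply_left_isotropicParam hxz,
    apply_isotropicParam_of_orthogonal hB hxz huz, h.apply_right_isotropicParam hB huz]
  field_simp
  ring

theorem isotropicParam_ne_zero (h : B.IsHyperbolicPair x u) (hB : B.IsSymm) (huz : B u z = 0)
    (t : K) : B.isotropicParam x u z t ≠ 0 := by
  intro h0
  simpa [h0] using h.apply_right_isotropicParam hB huz t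

theorem injective_span_isotropicParam (h : B.IsHyperbolicPair x u) (hB : B.IsSymm)
    (hxz : B x z = 0) (huz : B u z = 0) (hz : B z z ≠ 0) :
    Function.Injective fun t ↦ K ∙ B.isotropicParam x u z t := by
  intro t s hts
  obtain ⟨c, hc⟩ := Submodule.span_singleton_eq_span_singleton.mp hts
  have hc1 : (c : K) = 1 := by
    simpa [Units.smul_def, h.apply_right_isotropicParam hB huz] using congrArg (B u) hc
  have hts' := congrArg (B z) hc
  simp only [Units.smul_def, hc1, one_smul, apply_isotropicParam_of_orthogonal hB hxz huz]
    at hts'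
  exact mul_right_cancel₀ hz hts'

theorem setOf_isotropic_lines_infinite [Infinite K] [NeZero (2 : K)]
    (h : B.IsHyperbolicPair x u) (hB : B.IsSymm) (hxz : B x z = 0) (huz : B u z = 0)
    (hz : B z z ≠ 0) :
    {I : Submodule K V | ∃ v : V, v ≠ 0 ∧ B v v = 0 ∧ I = K ∙ v}.Infinite :=
  Set.infinite_of_injective_forall_mem (h.injective_span_isotropicParam hB hxz huz hz)
    fun t ↦
      ⟨_, h.isotropicParam_ne_zero hB huz t, h.apply_isotropicParam_self hB hxz huz t, rfl⟩

theorem linearIndependent_isotropicParam (h : B.IsHyperbolicPair x u) (hB : B.IsSymm)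
    (hxz : B x z = 0) (huz : B u z = 0) (hz : B z z ≠ 0) {t : K} (ht : t ≠ 0) :
    LinearIndependent K ![x, u, B.isotropicParam x u z t] := by
  rw [Fintype.linearIndependent_iff]
  intro g hg
  simp only [Fin.sum_univ_three, Matrix.cons_val_zero, Matrix.cons_val_one,
    Matrix.cons_val_two, Matrix.head_cons, Matrix.tail_cons] at hg
  have pair (y : V) := congrArg (B y) hg
  simp only [map_add, map_smul, smul_eq_mul, map_zero] at pair
  have h2 : g 2 = 0 := by
    simpa [hB.eq z x, hB.eq z u, hxz, huz, apply_isotropicParam_of_orthogonal hB hxz huz, ht, hz]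
      using pair z
  have h0 : g 0 = 0 := by
    simpa [hB.eq u x, h.apply_eq_one, h.isotropic_right, h2] using pair u
  have h1 : g 1 = 0 := by
    simpa [h.isotropic_left, h.apply_eq_one, h0, h2] using pair x
  intro i
  fin_cases i <;> assumption

end IsHyperbolicPair

theorem exists_repr_ne_zero_of_isotropic {ι : Type*} (b : Module.Basis ι K V) {i₀ : ι}
    (hi₀ : B (b i₀) (b i₀) ≠ 0) {x : V} (hx : x ≠ 0) (hxx : B x x = 0) :
    ∃ j ≠ i₀, b.repr x j ≠ 0 := by
  by_contra! h
  have hx₀ : x = b.repr x i₀ • b i₀ := b.ext_elem fun j ↦ by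
    by_cases hj : j = i₀
    · simp [hj]
    · simp [h j hj, Ne.symm hj]
  rw [hx₀] at hx hxx
  simp only [map_smul, LinearMap.smul_apply, smul_eq_mul, mul_eq_zero, or_self_left] at hxx
  simp [hxx.resolve_right hi₀] at hx

theorem apply_basis_of_orthogonal {ι : Type*} (b : Module.Basis ι K V)
    (horth : ∀ i j, i ≠ j → B (b i) (b j) = 0) (x : V) (j : ι) :
    B x (b j) = b.repr x j * B (b j) (b j) := by
  have hflip : B.flip (b j) = B (b j) (b j) • b.coord j := b.ext fun i ↦ by
    by_cases hij : i = j
    · simp [hij]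
    · simp [horth i j hij, hij]
  simpa [mul_comm] using LinearMap.congr_fun hflip x

theorem exists_orthogonal_apply_self_neg [LinearOrder K] [IsStrictOrderedRing K] {e f x : V}
    (hef : B e f = 0) (hfe : B f e = 0) (he : B e e < 0) (hf : B f f < 0) (hxe : B x e ≠ 0) :
    ∃ z, B x z = 0 ∧ B z z < 0 := by
  refine ⟨B x f • e - B x e • f, by simp [mul_comm], ?_⟩
  have hQ : B (B x f • e - B x e • f) (B x f • e - B x e • f)
      = B x f ^ 2 * B e e + B x e ^ 2 * B f f := by
    simp only [map_sub, map_smul, LinearMap.sub_apply, LinearMap.smul_apply, smul_eq_mul, hef,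
      hfe]
    ring
  rw [hQ]
  exact add_neg_of_nonpos_of_neg (mul_nonpos_of_nonneg_of_nonpos (sq_nonneg _) he.le)
    (mul_neg_of_pos_of_neg (sq_pos_of_ne_zero hxe) hf)

end LinearMap.BilinForm

open LinearMap.BilinForm

/-- A nondegenerate rational quadratic space of signature `(1, m)`, `m ≥ 2`, containing
an isotropic line contains infinitely many isotropic lines; in particular, given an
isotropic line `ℚx` there are isotropic lines `ℚx₃, ℚx₄` with `x, x₃, x₄` linearly
independent. -/
theorem stmt_10 {V : Type*} [AddCommGroup V] [Module ℚ V]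
    (m : ℕ) (hm : 2 ≤ m) (B : LinearMap.BilinForm ℚ V) (hsymm : ∀ x y, B x y = B y x)
    (b : Module.Basis (Fin (1 + m)) ℚ V)
    (horth : ∀ i j, i ≠ j → B (b i) (b j) = 0)
    (hsig : ∀ i : Fin (1 + m), if (i : ℕ) < 1 then 0 < B (b i) (b i) else B (b i) (b i) < 0)
    (x : V) (hx : x ≠ 0) (hiso : B x x = 0) :
    {I : Submodule ℚ V | ∃ v : V, v ≠ 0 ∧ B v v = 0 ∧ I = Submodule.span ℚ {v}}.Infinite ∧
    ∃ x₃ x₄ : V, B x₃ x₃ = 0 ∧ B x₄ x₄ = 0 ∧ LinearIndependent ℚ ![x, x₃, x₄] := by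
  have hB : B.IsSymm := ⟨hsymm⟩
  let i₀ : Fin (1 + m) := ⟨0, by omega⟩
  have hpos : 0 < B (b i₀) (b i₀) := by simpa [i₀] using hsig i₀
  have hneg (i : Fin (1 + m)) (hi : i ≠ i₀) : B (b i) (b i) < 0 := by
    have : ¬ (i : ℕ) < 1 := fun h ↦ hi (Fin.ext (Nat.lt_one_iff.mp h))
    simpa [this] using hsig i
  obtain ⟨j, hj, hxj⟩ := exists_repr_ne_zero_of_isotropic b hpos.ne' hx hiso
  obtain ⟨k, hk, hkj⟩ := Fin.exists_ne_and_ne_of_two_lt i₀ j (by omega)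
  have hxbj : B x (b j) ≠ 0 := by
    rw [apply_basis_of_orthogonal b horth]
    exact mul_ne_zero hxj (hneg j hj).ne
  obtain ⟨z, hxz, hz⟩ := exists_orthogonal_apply_self_neg (horth j k hkj.symm)
    (horth k j hkj) (hneg j hj) (hneg k hk) hxbj
  obtain ⟨u, hxu, huz⟩ := exists_isHyperbolicPair_and_apply_eq_zero hB hiso hxz hz.ne hxbj
  exact ⟨hxu.setOf_isotropic_lines_infinite hB hxz huz hz.ne, u, _, hxu.isotropic_right,
    hxu.apply_isotropicParam_self hB hxz huz 1,
    hxu.linearIndependent_isotropicParam hB hxz huz hz.ne one_ne_zero⟩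
end

section
/- Let Λ_ℚ be a rational symplectic space, I₁ an isotropic subspace of dimension g' > 1, and I₂ an isotropic subspace of the same dimension such that the pairing between I₁ and I₂ is perfect. For any nonzero proper subspace J₁ ⊊ I₁, set J₂ = J₁^⊥ ∩ I₂ and I₃ = J₁ ⊕ J₂. Then I₃ is an isotropic subspace of dimension g' satisfying I₁ ∩ I₃ ≠ {0} and I₃ ∩ I₂ ≠ {0}. -/
/-- In a rational symplectic space, let `I₁, I₂` be isotropic subspaces of dimension
`g' > 1` pairing perfectly. For any nonzero proper subspace `J₁ ⊊ I₁`, set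
`J₂ = J₁^⊥ ∩ I₂` and `I₃ = J₁ ⊕ J₂`. Then `I₃` is an isotropic subspace of dimension
`g'` with `I₁ ∩ I₃ ≠ 0` and `I₃ ∩ I₂ ≠ 0`. -/
theorem stmt_13 {V : Type*} [AddCommGroup V] [Module ℚ V] [FiniteDimensional ℚ V]
    (ω : LinearMap.BilinForm ℚ V) (halt : ∀ x, ω x x = 0)
    (hnd : ∀ x, (∀ y, ω x y = 0) → x = 0)
    (g' : ℕ) (hg' : 1 < g') (I₁ I₂ : Submodule ℚ V)
    (hd1 : Module.finrank ℚ I₁ = g') (hd2 : Module.finrank ℚ I₂ = g')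
    (hi1 : ∀ x ∈ I₁, ∀ y ∈ I₁, ω x y = 0) (hi2 : ∀ x ∈ I₂, ∀ y ∈ I₂, ω x y = 0)
    (hperf : Function.Bijective (fun x : I₁ => (ω (x : V)).comp I₂.subtype))
    (J₁ : Submodule ℚ V) (hJ₁I : J₁ ≤ I₁) (hJ₁ne : J₁ ≠ ⊥) (hJ₁pr : J₁ ≠ I₁)
    (J₂ : Submodule ℚ V) (hJ₂ : ∀ x, x ∈ J₂ ↔ x ∈ I₂ ∧ ∀ y ∈ J₁, ω y x = 0)
    (I₃ : Submodule ℚ V) (hI₃ : I₃ = J₁ ⊔ J₂) :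
    (∀ x ∈ I₃, ∀ y ∈ I₃, ω x y = 0) ∧ Module.finrank ℚ I₃ = g' ∧
    I₁ ⊓ I₃ ≠ ⊥ ∧ I₃ ⊓ I₂ ≠ ⊥ := by
  subst hI₃
  have skew : ∀ x y : V, ω x y = - ω y x := by
    intro x y
    have h := halt (x + y)
    simp only [map_add, LinearMap.add_apply, halt x, halt y] at h
    linarith
  have hJ₂I₂ : J₂ ≤ I₂ := fun x hx => ((hJ₂ x).1 hx).1
  -- pairwise isotropy
  have pair : ∀ x, (x ∈ J₁ ∨ x ∈ J₂) → ∀ y, (y ∈ J₁ ∨ y ∈ J₂) → ω x y = 0 := by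
    rintro x (hx | hx) y (hy | hy)
    · exact hi1 x (hJ₁I hx) y (hJ₁I hy)
    · exact ((hJ₂ y).1 hy).2 x hx
    · rw [skew]; rw [((hJ₂ x).1 hx).2 y hy]; ring
    · exact hi2 x (hJ₂I₂ hx) y (hJ₂I₂ hy)
  have hiso : ∀ x ∈ J₁ ⊔ J₂, ∀ y ∈ J₁ ⊔ J₂, ω x y = 0 := by
    intro x hx y hy
    obtain ⟨a, ha, b, hb, rfl⟩ := Submodule.mem_sup.1 hx
    obtain ⟨c, hc, d, hd, rfl⟩ := Submodule.mem_sup.1 hy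
    simp only [map_add, LinearMap.add_apply]
    rw [pair a (Or.inl ha) c (Or.inl hc), pair a (Or.inl ha) d (Or.inr hd),
      pair b (Or.inr hb) c (Or.inl hc), pair b (Or.inr hb) d (Or.inr hd)]
    ring
  -- I₁ ⊓ I₂ = ⊥
  have h12 : I₁ ⊓ I₂ = ⊥ := by
    rw [Submodule.eq_bot_iff]
    rintro x ⟨hx1, hx2⟩
    have : (⟨x, hx1⟩ : I₁) = 0 := by
      apply hperf.injective
      ext y
      simpa using hi2 x hx2 y y.2
    exact congrArg Subtype.val this
  -- the flipped pairing f : I₂ → Dual I₁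
  let f : I₂ →ₗ[ℚ] Module.Dual ℚ I₁ :=
    ((ω.flip.domRestrict I₂).compl₂ I₁.subtype)
  have hf_apply : ∀ (z : I₂) (y : I₁), f z y = ω y z := fun _ _ => rfl
  have hf_inj : Function.Injective f := by
    rw [← LinearMap.ker_eq_bot, Submodule.eq_bot_iff]
    intro z hz
    rw [LinearMap.mem_ker] at hz
    have hz' : ∀ φ : Module.Dual ℚ I₂, φ z = 0 := by
      intro φ
      obtain ⟨x, hx⟩ := hperf.surjective φ
      have : φ z = ω x z := by rw [← hx]; rfl
      rw [this]
      have := congrArg (fun g => g x) hz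
      simpa [hf_apply] using this
    exact (Module.forall_dual_apply_eq_zero_iff ℚ z).1 hz'
  have hf_surj : Function.Surjective f := by
    have : Module.finrank ℚ I₂ = Module.finrank ℚ (Module.Dual ℚ I₁) := by
      rw [Subspace.dual_finrank_eq, hd1, hd2]
    exact (LinearMap.injective_iff_surjective_of_finrank_eq_finrank this).1 hf_inj
  -- J₁ viewed inside I₁
  set J₁' : Submodule ℚ I₁ := J₁.comap I₁.subtype with hJ₁'def
  have hJ₁'rank : Module.finrank ℚ J₁' = Module.finrank ℚ J₁ :=
    (Submodule.comapSubtypeEquivOfLe hJ₁I).finrank_eq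
  -- h : I₂ → Dual J₁'
  let h : I₂ →ₗ[ℚ] Module.Dual ℚ J₁' := (J₁'.subtype.dualMap).comp f
  have hh_surj : Function.Surjective h :=
    (LinearMap.dualMap_surjective_of_injective J₁'.injective_subtype).comp hf_surj
  have hker : LinearMap.ker h = J₂.comap I₂.subtype := by
    ext z
    simp only [LinearMap.mem_ker, Submodule.mem_comap, Submodule.subtype_apply, hJ₂]
    constructor
    · intro hz
      refine ⟨z.2, fun y hy => ?_⟩
      have := congrArg (fun g => g ⟨⟨y, hJ₁I hy⟩, hy⟩) hz
      simpa [h, hf_apply] using this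
    · rintro ⟨-, hz⟩
      ext y
      simpa [h, hf_apply] using hz y.1 y.2
  have hJ₂rank : Module.finrank ℚ J₂ = Module.finrank ℚ (LinearMap.ker h) := by
    rw [hker]
    exact ((Submodule.comapSubtypeEquivOfLe hJ₂I₂).finrank_eq).symm
  have hrn := LinearMap.finrank_range_add_finrank_ker h
  have hrange : LinearMap.range h = ⊤ := LinearMap.range_eq_top.2 hh_surj
  rw [hrange] at hrn
  have hrtop : Module.finrank ℚ (⊤ : Submodule ℚ (Module.Dual ℚ J₁'))
      = Module.finrank ℚ J₁ := by
    rw [finrank_top, Subspace.dual_finrank_eq, hJ₁'rank]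
  have hsum : Module.finrank ℚ J₁ + Module.finrank ℚ J₂ = g' := by
    rw [hJ₂rank, ← hrtop, hrn, hd2]
  -- J₁ ⊓ J₂ = ⊥
  have hJinf : J₁ ⊓ J₂ = ⊥ := by
    rw [eq_bot_iff, ← h12]
    exact inf_le_inf hJ₁I hJ₂I₂
  have hd3 : Module.finrank ℚ ↥(J₁ ⊔ J₂) = g' := by
    have := Submodule.finrank_sup_add_finrank_inf_eq J₁ J₂
    rw [hJinf, finrank_bot, add_zero] at this
    rw [this, hsum]
  -- J₂ ≠ ⊥
  have hJ₁rank_pos : 0 < Module.finrank ℚ J₁ :=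
    Module.finrank_pos_iff.2 (Submodule.nontrivial_iff_ne_bot.2 hJ₁ne)
  have hJ₁rank_lt : Module.finrank ℚ J₁ < g' := by
    rw [← hd1]
    exact Submodule.finrank_lt_finrank_of_lt (lt_of_le_of_ne hJ₁I hJ₁pr)
  have hJ₂ne : J₂ ≠ ⊥ := by
    intro hbot
    rw [hbot, finrank_bot, add_zero] at hsum
    omega
  refine ⟨hiso, hd3, ?_, ?_⟩
  · intro hbot
    exact hJ₁ne (eq_bot_iff.2 (le_trans (le_inf hJ₁I le_sup_left) hbot.le))
  · intro hbot
    exact hJ₂ne (eq_bot_iff.2 (le_trans (le_inf le_sup_right hJ₂I₂) hbot.le))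
end
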